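/- arXiv:1412.0137 — 2 statements merged into one kernel-verified Lean document; each statement's English description precedes it below -/
import Mathlib

section
/- Let A be a line arrangement in ℝ², let m(A) be the maximal number of lines of A passing through a common point, let p(A) be the maximal number of pairwise parallel lines in A, and set ν_∞(A) = max{m(A)−1, p(A)}. If d < ν_∞(A), then every polynomial vector field χ = (P,Q) with deg P ≤ d, deg Q ≤ d that fixes every line of A has an infinite set of invariant lines (i.e., D_d(A) = D_d^∞(A)). -/
/-!
Both cases rest on one fact: a bivariate polynomial of degree at most `n` vanishing on `n + 1`
distinct lines that are all parallel, or all pass through one point `q₀`, is zero. Through any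
other point `p` there is a line meeting the `n + 1` lines in `n + 1` distinct points, and the
restriction of the polynomial to it is a univariate polynomial of degree at most `n` with
`n + 1` roots.

If more than `d` lines of `A` are parallel with normal `(a, b)`, the fact applies to `a P + b Q`,
so every line with normal `(a, b)` is invariant. If more than `d + 1` lines of `A` pass through
`q₀ = (x₀, y₀)`, it applies to `(x - x₀) Q - (y - y₀) P`, which vanishes on every invariant line
through `q₀`; then `χ` is radial about `q₀` and every line through `q₀` is invariant.
-/

open MvPolynomial

/-- Evaluation of a bivariate polynomial at a point of `ℝ × ℝ`
(the variable `X 0` is `x`, the variable `X 1` is `y`). -/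
noncomputable def pev (P : MvPolynomial (Fin 2) ℝ) (q : ℝ × ℝ) : ℝ :=
  MvPolynomial.eval ![q.1, q.2] P

/-- The line `{(x, y) | a * x + b * y + c = 0}`. -/
def lineSet (a b c : ℝ) : Set (ℝ × ℝ) := {q : ℝ × ℝ | a * q.1 + b * q.2 + c = 0}

/-- A subset of `ℝ²` is a line if it is the zero set of an affine form
`a * x + b * y + c` with `(a, b) ≠ (0, 0)`. -/
def IsLine (L : Set (ℝ × ℝ)) : Prop :=
  ∃ a b c : ℝ, (a, b) ≠ (0, 0) ∧ L = lineSet a b c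

/-- The line `L` is invariant by the polynomial vector field `χ = P ∂x + Q ∂y`:
for a defining affine form `a * x + b * y + c` of `L`, the polynomial
`a * P + b * Q` vanishes at every point of `L`. -/
def InvLine (P Q : MvPolynomial (Fin 2) ℝ) (L : Set (ℝ × ℝ)) : Prop :=
  ∃ a b c : ℝ, (a, b) ≠ (0, 0) ∧ L = lineSet a b c ∧
    ∀ q ∈ L, a * pev P q + b * pev Q q = 0

open scoped Classical in
/-- The number of lines of the arrangement `A` passing through the point `q`. -/
noncomputable def numThrough (A : Finset (Set (ℝ × ℝ))) (q : ℝ × ℝ) : ℕ :=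
  (A.filter (fun L => q ∈ L)).card

/-- `mArr A` is the maximal number of lines of `A` passing through a common point. -/
noncomputable def mArr (A : Finset (Set (ℝ × ℝ))) : ℕ :=
  sSup (Set.range (numThrough A))

/-- Two lines are parallel if they are equal or disjoint. -/
def ParLines (L L' : Set (ℝ × ℝ)) : Prop := L = L' ∨ L ∩ L' = ∅

/-- `pArr A` is the maximal number of pairwise parallel lines in `A`. -/
noncomputable def pArr (A : Finset (Set (ℝ × ℝ))) : ℕ :=
  sSup {k : ℕ | ∃ S : Finset (Set (ℝ × ℝ)), S ⊆ A ∧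
    (∀ L ∈ S, ∀ L' ∈ S, ParLines L L') ∧ S.card = k}


lemma eq_zero_of_mul_eq_zero_of_mul_eq_zero {a b x : ℝ} (hab : (a, b) ≠ (0, 0))
    (ha : a * x = 0) (hb : b * x = 0) : x = 0 := by
  by_contra hx
  exact hab (Prod.ext (by simpa [hx] using ha) (by simpa [hx] using hb))

lemma mul_self_add_mul_self_ne_zero {a b : ℝ} (hab : (a, b) ≠ (0, 0)) : a * a + b * b ≠ 0 :=
  fun h => hab (by obtain ⟨rfl, rfl⟩ := mul_self_add_mul_self_eq_zero.mp h; rfl)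

lemma dot_eq_zero_of_det_eq_zero {a b a' b' x y : ℝ} (hab' : (a', b') ≠ (0, 0))
    (hdet : a * b' = a' * b) (h : a' * x + b' * y = 0) : a * x + b * y = 0 :=
  eq_zero_of_mul_eq_zero_of_mul_eq_zero hab' (by linear_combination a * h - y * hdet)
    (by linear_combination b * h + x * hdet)

lemma det_eq_zero_of_dot_eq_zero {a b u v x y : ℝ} (hxy : (x, y) ≠ (0, 0))
    (h₁ : x * a + y * b = 0) (h₂ : x * u + y * v = 0) : a * v = u * b :=
  sub_eq_zero.mp <| eq_zero_of_mul_eq_zero_of_mul_eq_zero hxy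
    (by linear_combination v * h₁ - b * h₂) (by linear_combination a * h₂ - u * h₁)

lemma mem_lineSet {a b c : ℝ} {q : ℝ × ℝ} : q ∈ lineSet a b c ↔ a * q.1 + b * q.2 + c = 0 :=
  Iff.rfl

lemma add_smul_mem_lineSet {a b c : ℝ} {v : ℝ × ℝ} (hv : a * v.1 + b * v.2 ≠ 0) (p : ℝ × ℝ) :
    p + (-(a * p.1 + b * p.2 + c) / (a * v.1 + b * v.2)) • v ∈ lineSet a b c := by
  rw [mem_lineSet]
  simp only [Prod.fst_add, Prod.snd_add, Prod.smul_fst, Prod.smul_snd, smul_eq_mul]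
  field_simp
  ring

lemma exists_mem_lineSet {a b : ℝ} (hab : (a, b) ≠ (0, 0)) (c : ℝ) : ∃ q, q ∈ lineSet a b c :=
  ⟨_, add_smul_mem_lineSet (v := (a, b)) (mul_self_add_mul_self_ne_zero hab) 0⟩

lemma InvLine.isLine {P Q : MvPolynomial (Fin 2) ℝ} {L : Set (ℝ × ℝ)} (h : InvLine P Q L) :
    IsLine L :=
  let ⟨a, b, c, hab, hL, _⟩ := h
  ⟨a, b, c, hab, hL⟩

lemma IsLine.eq_of_mem_of_mem {L L' : Set (ℝ × ℝ)} (hL : IsLine L) (hL' : IsLine L')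
    {p q : ℝ × ℝ} (hpq : p ≠ q) (hpL : p ∈ L) (hqL : q ∈ L) (hpL' : p ∈ L') (hqL' : q ∈ L') :
    L = L' := by
  obtain ⟨a, b, c, hab, rfl⟩ := hL
  obtain ⟨a', b', c', hab', rfl⟩ := hL'
  rw [mem_lineSet] at hpL hqL hpL' hqL'
  have hqp : (q.1 - p.1, q.2 - p.2) ≠ (0, 0) := fun h =>
    hpq (Prod.ext (by linarith [congrArg Prod.fst h]) (by linarith [congrArg Prod.snd h]))
  have hdet : a * b' = a' * b :=
    det_eq_zero_of_dot_eq_zero hqp (by linarith) (by linarith)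
  ext r
  simp only [mem_lineSet]
  constructor
  · intro hr
    have := dot_eq_zero_of_det_eq_zero (x := r.1 - p.1) (y := r.2 - p.2) hab hdet.symm
      (by linarith)
    linarith
  · intro hr
    have := dot_eq_zero_of_det_eq_zero (x := r.1 - p.1) (y := r.2 - p.2) hab' hdet
      (by linarith)
    linarith

lemma det_eq_zero_of_parLines {a b c a' b' c' : ℝ} (hab : (a, b) ≠ (0, 0))
    (h : ParLines (lineSet a b c) (lineSet a' b' c')) : a * b' = a' * b := by
  rcases h with h | h
  · obtain ⟨r, hr⟩ := exists_mem_lineSet hab c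
    have hs : (r.1 - b, r.2 + a) ∈ lineSet a b c := by
      rw [mem_lineSet] at hr ⊢; linear_combination hr
    rw [h, mem_lineSet] at hr hs
    linear_combination hs - hr
  · by_contra hdet
    have hD : (a * b' - a' * b) * (a * b' - a' * b)⁻¹ = 1 :=
      mul_inv_cancel₀ (sub_ne_zero.mpr hdet)
    have hmem : ((b * c' - b' * c) / (a * b' - a' * b), (a' * c - a * c') / (a * b' - a' * b)) ∈
        lineSet a b c ∩ lineSet a' b' c' := by
      constructor <;> rw [mem_lineSet]
      · linear_combination (-c) * hD
      · linear_combination (-c') * hD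
    rw [h] at hmem
    exact hmem

lemma exists_lineSet_eq_of_det_eq_zero {a b a' b' : ℝ} (hab : (a, b) ≠ (0, 0))
    (hab' : (a', b') ≠ (0, 0)) (hdet : a * b' = a' * b) (c' : ℝ) :
    ∃ c, lineSet a' b' c' = lineSet a b c := by
  obtain ⟨r, hr⟩ := exists_mem_lineSet hab' c'
  rw [mem_lineSet] at hr
  refine ⟨-(a * r.1 + b * r.2), Set.ext fun q => ?_⟩
  simp only [mem_lineSet]
  constructor
  · intro hq
    have := dot_eq_zero_of_det_eq_zero (x := q.1 - r.1) (y := q.2 - r.2) hab' hdet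
      (by linarith)
    linarith
  · intro hq
    have := dot_eq_zero_of_det_eq_zero (x := q.1 - r.1) (y := q.2 - r.2) hab hdet.symm
      (by linarith)
    linarith

lemma natDegree_aeval_le_totalDegree {σ K : Type*} [CommSemiring K] {f : σ → Polynomial K}
    (hf : ∀ i, (f i).natDegree ≤ 1) (R : MvPolynomial σ K) :
    (aeval f R).natDegree ≤ R.totalDegree := by
  conv_lhs => rw [R.as_sum, map_sum]
  refine Polynomial.natDegree_sum_le_of_forall_le _ _ fun u hu => ?_
  rw [aeval_monomial, Polynomial.algebraMap_eq]
  refine (Polynomial.natDegree_C_mul_le _ _).trans ?_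
  calc (u.prod fun i k => f i ^ k).natDegree ≤ ∑ i ∈ u.support, (f i ^ u i).natDegree :=
        Polynomial.natDegree_prod_le _ _
    _ ≤ ∑ i ∈ u.support, u i :=
        Finset.sum_le_sum fun i _ => Polynomial.natDegree_pow_le_of_le _ (hf i) |>.trans (by simp)
    _ ≤ R.totalDegree := le_totalDegree hu

noncomputable def restrictToLine (R : MvPolynomial (Fin 2) ℝ) (p v : ℝ × ℝ) : Polynomial ℝ :=
  aeval ![Polynomial.C v.1 * Polynomial.X + Polynomial.C p.1,
    Polynomial.C v.2 * Polynomial.X + Polynomial.C p.2] R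

lemma eval_restrictToLine (R : MvPolynomial (Fin 2) ℝ) (p v : ℝ × ℝ) (t : ℝ) :
    (restrictToLine R p v).eval t = pev R (p + t • v) := by
  rw [restrictToLine, pev, ← Polynomial.coe_evalRingHom, aeval_def, hom_eval₂]
  congr 1
  · ext; simp
  · ext i; fin_cases i <;> simp <;> ring

lemma natDegree_restrictToLine_le (R : MvPolynomial (Fin 2) ℝ) (p v : ℝ × ℝ) :
    (restrictToLine R p v).natDegree ≤ R.totalDegree :=
  natDegree_aeval_le_totalDegree
    (fun i => by fin_cases i <;> exact Polynomial.natDegree_linear_le) R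

lemma pev_eq_zero_of_totalDegree_lt_card (R : MvPolynomial (Fin 2) ℝ) (p v : ℝ × ℝ)
    (ts : Finset ℝ) (hts : R.totalDegree < ts.card) (h : ∀ t ∈ ts, pev R (p + t • v) = 0) :
    pev R p = 0 := by
  have hzero : restrictToLine R p v = 0 :=
    Polynomial.eq_zero_of_natDegree_lt_card_of_eval_eq_zero' _ ts
      (fun t ht => (eval_restrictToLine R p v t).trans (h t ht))
      ((natDegree_restrictToLine_le R p v).trans_lt hts)
  simpa [eval_restrictToLine] using congrArg (Polynomial.eval 0) hzero

lemma pev_eq_zero_of_forall_ne_zero (R : MvPolynomial (Fin 2) ℝ) (p v : ℝ × ℝ)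
    (h : ∀ t : ℝ, t ≠ 0 → pev R (p + t • v) = 0) : pev R p = 0 := by
  have hzero : restrictToLine R p v = 0 :=
    Polynomial.eq_zero_of_infinite_isRoot _ <| (Set.finite_singleton 0).infinite_compl.mono
      fun t ht => (eval_restrictToLine R p v t).trans (h t ht)
  simpa [eval_restrictToLine] using congrArg (Polynomial.eval 0) hzero

lemma pev_eq_zero_of_parallel {a b : ℝ} (hab : (a, b) ≠ (0, 0)) (R : MvPolynomial (Fin 2) ℝ)
    (cs : Finset ℝ) (hcs : R.totalDegree < cs.card)
    (h : ∀ c ∈ cs, ∀ q ∈ lineSet a b c, pev R q = 0) (p : ℝ × ℝ) : pev R p = 0 := by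
  have hn := mul_self_add_mul_self_ne_zero hab
  set t : ℝ → ℝ := fun c => -(a * p.1 + b * p.2 + c) / (a * a + b * b)
  have ht : Function.Injective t := fun c c' hcc' => by
    linarith [(div_left_inj' hn).mp hcc']
  refine pev_eq_zero_of_totalDegree_lt_card R p (a, b) (cs.image t)
    (by rwa [Finset.card_image_of_injective _ ht]) ?_
  simp only [Finset.forall_mem_image]
  exact fun c hc => h c hc _ (add_smul_mem_lineSet (v := (a, b)) hn p)

lemma IsLine.eventually_exists_add_smul_mem {L : Set (ℝ × ℝ)} (hL : IsLine L) :
    ∀ᶠ s in Filter.cofinite, ∀ p : ℝ × ℝ, ∃ t : ℝ, p + t • ((1 : ℝ), s) ∈ L := by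
  obtain ⟨a, b, c, hab, rfl⟩ := hL
  refine Filter.eventually_cofinite.mpr <| Set.Subsingleton.finite fun s hs s' hs' => ?_
  have hroot : ∀ s : ℝ, (¬∀ p : ℝ × ℝ, ∃ t : ℝ, p + t • ((1 : ℝ), s) ∈ lineSet a b c) →
      a + b * s = 0 := fun s hs => by
    by_contra hv
    exact hs fun p => ⟨_, add_smul_mem_lineSet (by simpa using hv) p⟩
  have hs₀ := hroot s hs
  have hb : b ≠ 0 := by
    rintro rfl
    exact hab (by rw [show a = 0 by linarith])
  exact mul_left_cancel₀ hb (by linarith [hroot s' hs'])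

lemma eventually_add_smul_ne {p q : ℝ × ℝ} (hpq : p ≠ q) :
    ∀ᶠ s in Filter.cofinite, ∀ t : ℝ, p + t • ((1 : ℝ), s) ≠ q := by
  refine Filter.eventually_cofinite.mpr <| Set.Subsingleton.finite fun s hs s' hs' => ?_
  simp only [Set.mem_ofPred_eq, not_forall, not_not] at hs hs'
  obtain ⟨t, ht⟩ := hs
  obtain ⟨t', ht'⟩ := hs'
  have h₁ : t = q.1 - p.1 := by simp [← ht]
  have h₁' : t' = q.1 - p.1 := by simp [← ht']
  have ht0 : t ≠ 0 := by rintro rfl; simp at ht; exact hpq ht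
  have h₂ : t * s = t' * s' := by simpa using congrArg Prod.snd (ht.trans ht'.symm)
  rw [h₁', ← h₁] at h₂
  exact mul_left_cancel₀ ht0 h₂

lemma pev_eq_zero_of_concurrent (R : MvPolynomial (Fin 2) ℝ) (q₀ : ℝ × ℝ)
    (T : Finset (Set (ℝ × ℝ))) (hT : ∀ L ∈ T, IsLine L ∧ q₀ ∈ L) (hcard : R.totalDegree < T.card)
    (h : ∀ L ∈ T, ∀ q ∈ L, pev R q = 0) (p : ℝ × ℝ) : pev R p = 0 := by
  classical
  rcases eq_or_ne p q₀ with rfl | hp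
  · obtain ⟨L, hL⟩ := Finset.card_pos.mp ((Nat.zero_le _).trans_lt hcard)
    exact h L hL p (hT L hL).2
  obtain ⟨s, hmeet, hmiss⟩ := (((Filter.eventually_all_finset T).mpr fun L hL =>
    (hT L hL).1.eventually_exists_add_smul_mem).and (eventually_add_smul_ne hp)).exists
  -- Two lines through `q₀` sharing a point other than `q₀` coincide, and the transversal
  -- through `p` with slope `s` misses `q₀`, so it meets distinct lines of `T` at distinct `t`.
  choose! t ht using fun L hL => hmeet L hL p
  have hinj : Set.InjOn t T := fun L hL L' hL' htt' =>
    (hT L hL).1.eq_of_mem_of_mem (hT L' hL').1 (hmiss (t L)) (ht L hL) (hT L hL).2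
      (htt' ▸ ht L' hL') (hT L' hL').2
  refine pev_eq_zero_of_totalDegree_lt_card R p (1, s) (T.image t)
    (by rwa [Finset.card_image_of_injOn hinj]) ?_
  simp only [Finset.forall_mem_image]
  exact fun L hL => h L hL _ (ht L hL)

lemma pev_smul_add_smul (a b : ℝ) (P Q : MvPolynomial (Fin 2) ℝ) (q : ℝ × ℝ) :
    pev (a • P + b • Q) q = a * pev P q + b * pev Q q := by
  simp [pev]

lemma infinite_setOf_invLine_of_parallel {P Q : MvPolynomial (Fin 2) ℝ} {d : ℕ}
    (hP : P.totalDegree ≤ d) (hQ : Q.totalDegree ≤ d) (S : Finset (Set (ℝ × ℝ)))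
    (hS : ∀ L ∈ S, ∀ L' ∈ S, ParLines L L') (hfix : ∀ L ∈ S, InvLine P Q L)
    (hcard : d < S.card) : {M | InvLine P Q M}.Infinite := by
  obtain ⟨L₀, hL₀⟩ := Finset.card_pos.mp ((Nat.zero_le _).trans_lt hcard)
  obtain ⟨a, b, c₀, hab, rfl, -⟩ := hfix L₀ hL₀
  have hnormal : ∀ L ∈ S, ∃ c, L = lineSet a b c ∧ ∀ q ∈ L, a * pev P q + b * pev Q q = 0 := by
    intro L hL
    obtain ⟨a', b', c', hab', rfl, hinv⟩ := hfix L hL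
    have hdet := det_eq_zero_of_parLines hab (hS _ hL₀ _ hL)
    obtain ⟨c, hc⟩ := exists_lineSet_eq_of_det_eq_zero hab hab' hdet c'
    exact ⟨c, hc, fun q hq => dot_eq_zero_of_det_eq_zero hab' hdet (hinv q hq)⟩
  choose! c hc hinv using hnormal
  have hinj : Set.InjOn c S := fun L hL L' hL' hcc' => by rw [hc L hL, hc L' hL', hcc']
  have hR : ∀ q, pev (a • P + b • Q) q = 0 := by
    refine pev_eq_zero_of_parallel hab _ (S.image c) ?_ ?_
    · rw [Finset.card_image_of_injOn hinj]
      exact (totalDegree_add _ _).trans_lt <| max_lt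
        ((totalDegree_smul_le _ _).trans_lt (hP.trans_lt hcard))
        ((totalDegree_smul_le _ _).trans_lt (hQ.trans_lt hcard))
    · simp only [Finset.forall_mem_image]
      intro L hL q hq
      rw [pev_smul_add_smul]
      exact hinv L hL q (hc L hL ▸ hq)
  refine Set.infinite_of_injective_forall_mem (f := lineSet a b) (fun c c' hcc' => ?_)
    fun c => ⟨a, b, c, hab, rfl, fun q _ => (pev_smul_add_smul a b P Q q).symm.trans (hR q)⟩
  obtain ⟨r, hr⟩ := exists_mem_lineSet hab c
  have hr' := hcc' ▸ hr
  rw [mem_lineSet] at hr hr'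
  linarith

def IsRadialAt (P Q : MvPolynomial (Fin 2) ℝ) (q₀ : ℝ × ℝ) : Prop :=
  ∀ q : ℝ × ℝ, (q.1 - q₀.1) * pev Q q = (q.2 - q₀.2) * pev P q

lemma isRadialAt_of_concurrent {P Q : MvPolynomial (Fin 2) ℝ} {d : ℕ}
    (hP : P.totalDegree ≤ d) (hQ : Q.totalDegree ≤ d) (q₀ : ℝ × ℝ) (T : Finset (Set (ℝ × ℝ)))
    (hT : ∀ L ∈ T, q₀ ∈ L) (hfix : ∀ L ∈ T, InvLine P Q L) (hcard : d + 1 < T.card) :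
    IsRadialAt P Q q₀ := by
  intro q
  set W : MvPolynomial (Fin 2) ℝ := (X 0 - C q₀.1) * Q - (X 1 - C q₀.2) * P
  have hW : ∀ q, pev W q = (q.1 - q₀.1) * pev Q q - (q.2 - q₀.2) * pev P q := fun q => by
    simp [W, pev]
  have hWdeg : W.totalDegree ≤ d + 1 := by
    have hlin : ∀ (i : Fin 2) (r : ℝ), (X i - C r : MvPolynomial (Fin 2) ℝ).totalDegree ≤ 1 :=
      fun i r => (totalDegree_sub_C_le _ _).trans (totalDegree_X i).le
    refine (totalDegree_sub _ _).trans (max_le ?_ ?_) <;> refine (totalDegree_mul _ _).trans ?_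
    · linarith [hlin 0 q₀.1]
    · linarith [hlin 1 q₀.2]
  have hvanish : ∀ L ∈ T, ∀ q ∈ L, pev W q = 0 := by
    intro L hL q hq
    obtain ⟨a, b, c, hab, rfl, hinv⟩ := hfix L hL
    have h₀ := hT _ hL
    rw [mem_lineSet] at hq h₀
    rw [hW, sub_eq_zero]
    exact (det_eq_zero_of_dot_eq_zero hab (by linarith) (hinv q hq)).trans (mul_comm _ _)
  rw [← sub_eq_zero, ← hW]
  exact pev_eq_zero_of_concurrent W q₀ T (fun L hL => ⟨(hfix L hL).isLine, hT L hL⟩)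
    (hWdeg.trans_lt hcard) hvanish q

lemma IsRadialAt.infinite_setOf_invLine {P Q : MvPolynomial (Fin 2) ℝ} {q₀ : ℝ × ℝ}
    (h : IsRadialAt P Q q₀) :
    {M | InvLine P Q M}.Infinite := by
  set M : ℝ → Set (ℝ × ℝ) := fun u => lineSet u 1 (-(u * q₀.1 + q₀.2))
  have hmem : ∀ u t : ℝ, q₀ + t • (1, -u) ∈ M u := fun u t => by
    simp only [M, mem_lineSet, Prod.fst_add, Prod.snd_add, Prod.smul_fst, Prod.smul_snd,
      smul_eq_mul]
    ring
  refine Set.infinite_of_injective_forall_mem (f := M) (fun u u' huu' => ?_) fun u => ?_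
  · have := huu' ▸ hmem u 1
    simp only [M, mem_lineSet, Prod.fst_add, Prod.snd_add, Prod.smul_fst, Prod.smul_snd,
      smul_eq_mul] at this
    linarith
  have hline : ∀ t : ℝ, pev (u • P + (1 : ℝ) • Q) (q₀ + t • (1, -u)) = 0 := by
    have hne : ∀ t : ℝ, t ≠ 0 → pev (u • P + (1 : ℝ) • Q) (q₀ + t • (1, -u)) = 0 := by
      intro t ht
      have := h (q₀ + t • (1, -u))
      simp only [Prod.fst_add, Prod.snd_add, Prod.smul_fst, Prod.smul_snd, smul_eq_mul,
        add_sub_cancel_left] at this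
      rw [pev_smul_add_smul]
      exact mul_left_cancel₀ ht (by linear_combination this)
    intro t
    rcases eq_or_ne t 0 with rfl | ht
    · simpa using pev_eq_zero_of_forall_ne_zero _ q₀ (1, -u) hne
    · exact hne t ht
  refine ⟨u, 1, _, by simp, rfl, fun q hq => ?_⟩
  have hq : q = q₀ + (q.1 - q₀.1) • (1, -u) := by
    simp only [M, mem_lineSet] at hq
    refine Prod.ext (by simp) ?_
    simp only [Prod.snd_add, Prod.smul_snd, smul_eq_mul]
    linarith
  have := hline (q.1 - q₀.1)
  rwa [← hq, pev_smul_add_smul] at this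

theorem low_degree_fixing_is_infinite_type_general
    (A : Finset (Set (ℝ × ℝ))) (d : ℕ)
    (hd : d < max (mArr A - 1) (pArr A))
    (P Q : MvPolynomial (Fin 2) ℝ)
    (hP : P.totalDegree ≤ d) (hQ : Q.totalDegree ≤ d)
    (hfix : ∀ L ∈ A, InvLine P Q L) :
    {M : Set (ℝ × ℝ) | InvLine P Q M}.Infinite := by
  classical
  rcases lt_max_iff.mp hd with hm | hp
  · obtain ⟨_, ⟨q₀, rfl⟩, hq₀⟩ := exists_lt_of_lt_csSup' (show d + 1 < mArr A by omega)
    exact (isRadialAt_of_concurrent hP hQ q₀ _ (fun L hL => (Finset.mem_filter.mp hL).2)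
      (fun L hL => hfix L (Finset.mem_filter.mp hL).1) hq₀).infinite_setOf_invLine
  · obtain ⟨_, ⟨S, hSA, hS, rfl⟩, hcard⟩ := exists_lt_of_lt_csSup' hp
    exact infinite_setOf_invLine_of_parallel hP hQ S hS (fun L hL => hfix L (hSA hL)) hcard

/-- **Theorem.** Let `A` be a line arrangement and `ν_∞(A) = max (m(A) - 1) (p(A))`.
If `d < ν_∞(A)`, then every polynomial vector field `(P, Q)` with `deg P ≤ d`,
`deg Q ≤ d` fixing every line of `A` has an infinite set of invariant lines,
i.e. `D_d(A) = D_d^∞(A)`. -/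
theorem low_degree_fixing_is_infinite_type
    (A : Finset (Set (ℝ × ℝ))) (hA : ∀ L ∈ A, IsLine L) (d : ℕ)
    (hd : d < max (mArr A - 1) (pArr A))
    (P Q : MvPolynomial (Fin 2) ℝ)
    (hP : P.totalDegree ≤ d) (hQ : Q.totalDegree ≤ d)
    (hfix : ∀ L ∈ A, InvLine P Q L) :
    {M : Set (ℝ × ℝ) | InvLine P Q M}.Infinite :=
  low_degree_fixing_is_infinite_type_general A d hd P Q hP hQ hfix
end

section
/- Let A be a nonempty line arrangement in ℝ² with |A| = n lines and maximal multiplicity m(A). Then the minimal degree of a nonzero central polynomial vector field fixing every line of A is exactly n − m(A) + 1: there exists a nonzero central vector field of degree n − m(A) + 1 fixing A, and every nonzero central vector field fixing A has degree at least n − m(A) + 1. -/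
open MvPolynomial

/-- A nonzero polynomial vector field `(P, Q)` is central if there is a center
`(x₀, y₀)` with `(x - x₀) * Q = (y - y₀) * P` identically. -/
def IsCentral (P Q : MvPolynomial (Fin 2) ℝ) : Prop :=
  (P ≠ 0 ∨ Q ≠ 0) ∧ ∃ c : ℝ × ℝ, (X 0 - C c.1) * Q = (X 1 - C c.2) * P

/-- A nonzero polynomial vector field `(P, Q)` is parallel if there is a direction
`v ≠ (0, 0)` with `v₁ * Q = v₂ * P` identically. -/
def IsParallelVF (P Q : MvPolynomial (Fin 2) ℝ) : Prop :=
  (P ≠ 0 ∨ Q ≠ 0) ∧ ∃ v : ℝ × ℝ, v ≠ (0, 0) ∧ C v.1 * Q = C v.2 * P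

/-!
A central field with centre `c` factors as `P = (x - c₁) g`, `Q = (y - c₂) g`, since `x - c₁` is
prime and does not divide `y - c₂`. For a line `L = {ℓ = 0}` with `ℓ = a x + b y + d` one has
`a P + b Q = -ℓ(c) g` on `L`, so `L` is invariant iff it passes through `c` or `g` vanishes on
`L`, i.e. `ℓ ∣ g`. Forms of distinct lines are non-associated primes, hence `deg g` is at least
the number of lines of `A` missing `c`, which is at least `n - m(A)`. Taking for `c` a point of
maximal multiplicity and for `g` the product of the forms of the lines missing `c` attains the
bound.
-/

open Finset

lemma prime_of_totalDegree_eq_one {σ K : Type*} [Field K] {p : MvPolynomial σ K}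
    (hp : p.totalDegree = 1) : Prime p := by
  refine (irreducible_of_totalDegree_eq_one hp fun r hr => isUnit_iff_ne_zero.2 fun hr0 => ?_).prime
  have : p = 0 := by ext m; simpa [hr0] using hr m
  simp [this] at hp

lemma totalDegree_X_sub_C {σ R : Type*} [CommRing R] [Nontrivial R] (i : σ) (r : R) :
    (X i - C r : MvPolynomial σ R).totalDegree = 1 := by
  refine le_antisymm ((totalDegree_sub_C_le _ _).trans (totalDegree_X i).le)
    (Nat.one_le_iff_ne_zero.2 fun h => ?_)
  have := congrArg (coeff (Finsupp.single i 1)) (totalDegree_eq_zero_iff_eq_C.1 h)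
  simp at this

lemma X_sub_C_ne_zero {σ R : Type*} [CommRing R] [Nontrivial R] (i : σ) (r : R) :
    (X i - C r : MvPolynomial σ R) ≠ 0 := fun h => by
  simpa [h] using totalDegree_X_sub_C i r

lemma totalDegree_X_sub_C_mul {σ R : Type*} [CommRing R] [IsDomain R] (i : σ) (r : R)
    {g : MvPolynomial σ R} (hg : g ≠ 0) : ((X i - C r) * g).totalDegree = g.totalDegree + 1 := by
  rw [totalDegree_mul_of_isDomain (X_sub_C_ne_zero i r) hg, totalDegree_X_sub_C, add_comm]

lemma dvd_sub_aeval_of_forall_dvd_X_sub {σ R : Type*} [CommRing R] {p : MvPolynomial σ R}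
    (φ : MvPolynomial σ R →ₐ[R] MvPolynomial σ R) (hφ : ∀ i, p ∣ X i - φ (X i))
    (f : MvPolynomial σ R) : p ∣ f - φ f := by
  set I := Ideal.span {p}
  have : (Ideal.Quotient.mkₐ R I).comp φ = Ideal.Quotient.mkₐ R I :=
    (algHom_ext fun i => Ideal.Quotient.eq.2 (Ideal.mem_span_singleton.2 (hφ i))).symm
  rw [← Ideal.mem_span_singleton, ← Ideal.Quotient.eq]
  exact (DFunLike.congr_fun this f).symm

lemma pev_mul (f g : MvPolynomial (Fin 2) ℝ) (q : ℝ × ℝ) : pev (f * g) q = pev f q * pev g q :=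
  map_mul _ f g

noncomputable def affineForm (a b c : ℝ) : MvPolynomial (Fin 2) ℝ := C a * X 0 + C b * X 1 + C c

section affineForm

variable {a b c : ℝ}

lemma pev_affineForm (q : ℝ × ℝ) : pev (affineForm a b c) q = a * q.1 + b * q.2 + c := by
  simp [pev, affineForm]

lemma mem_lineSet_iff {q : ℝ × ℝ} : q ∈ lineSet a b c ↔ pev (affineForm a b c) q = 0 := by
  rw [pev_affineForm]; rfl

lemma totalDegree_affineForm (hab : (a, b) ≠ (0, 0)) : (affineForm a b c).totalDegree = 1 := by
  refine le_antisymm ?_ (Nat.one_le_iff_ne_zero.2 fun h => hab ?_)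
  · refine (totalDegree_add _ _).trans (max_le ((totalDegree_add _ _).trans (max_le ?_ ?_))
      ((totalDegree_C c).trans_le zero_le_one)) <;> exact (totalDegree_mul _ _).trans (by simp)
  · have hr := totalDegree_eq_zero_iff_eq_C.1 h
    have h0 := congrArg (coeff (Finsupp.single 0 1)) hr
    have h1 := congrArg (coeff (Finsupp.single 1 1)) hr
    simp [affineForm, coeff_X, coeff_C, Finsupp.single_eq_single_iff] at h0 h1
    simp [h0, h1]

lemma affineForm_ne_zero (hab : (a, b) ≠ (0, 0)) : affineForm a b c ≠ 0 := fun h => by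
  simpa [h] using totalDegree_affineForm (c := c) hab

lemma affineForm_dvd_iff (hab : (a, b) ≠ (0, 0)) {f : MvPolynomial (Fin 2) ℝ} :
    affineForm a b c ∣ f ↔ ∀ q ∈ lineSet a b c, pev f q = 0 := by
  refine ⟨fun ⟨k, hk⟩ q hq => by rw [hk, pev_mul, mem_lineSet_iff.1 hq, zero_mul], fun hf => ?_⟩
  have hs : a ^ 2 + b ^ 2 ≠ 0 := fun h => hab (by
    simp only [Prod.mk.injEq]; constructor <;> nlinarith [sq_nonneg a, sq_nonneg b])
  -- `π` substitutes for `(x, y)` its orthogonal projection onto the line: `π f = 0` since `f`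
  -- vanishes on the line, while `f ≡ π f` modulo the form.
  set π : MvPolynomial (Fin 2) ℝ →ₐ[ℝ] MvPolynomial (Fin 2) ℝ := aeval
    ![X 0 - C (a / (a ^ 2 + b ^ 2)) * affineForm a b c,
      X 1 - C (b / (a ^ 2 + b ^ 2)) * affineForm a b c]
  have hπ : π f = 0 := by
    refine MvPolynomial.funext fun x => ?_
    set t := (a * x 0 + b * x 1 + c) / (a ^ 2 + b ^ 2)
    have hx : (x 0 - a * t, x 1 - b * t) ∈ lineSet a b c := by
      rw [mem_lineSet_iff, pev_affineForm]
      simp only [t]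
      field_simp
      ring
    rw [map_zero, ← aeval_eq_eval, comp_aeval_apply, ← hf _ hx, pev, ← aeval_eq_eval]
    congr 2
    funext i
    fin_cases i <;> simp [affineForm, t] <;> ring
  have hX : ∀ i, affineForm a b c ∣ X i - π (X i) := by
    intro i
    fin_cases i <;> simp [π]
  simpa [hπ] using dvd_sub_aeval_of_forall_dvd_X_sub π hX f

lemma lineSet_eq_of_affineForm_dvd {a' b' c' : ℝ} (hab : (a, b) ≠ (0, 0))
    (hab' : (a', b') ≠ (0, 0)) (h : affineForm a b c ∣ affineForm a' b' c') :
    lineSet a b c = lineSet a' b' c' := by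
  obtain ⟨k, hk⟩ := h
  have hk0 : k ≠ 0 := right_ne_zero_of_mul (hk ▸ affineForm_ne_zero hab')
  have hdeg := congrArg totalDegree hk
  rw [totalDegree_mul_of_isDomain (affineForm_ne_zero hab) hk0, totalDegree_affineForm hab,
    totalDegree_affineForm hab'] at hdeg
  have hkC := totalDegree_eq_zero_iff_eq_C.1 (by omega : k.totalDegree = 0)
  have hr : coeff 0 k ≠ 0 := fun h0 => hk0 (by rw [hkC, h0, C_0])
  ext q
  rw [mem_lineSet_iff, mem_lineSet_iff, hk, pev_mul, hkC]
  simp [pev, hr]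

end affineForm

lemma card_le_totalDegree_of_forall_pev_eq_zero {S : Finset (Set (ℝ × ℝ))}
    (hS : ∀ L ∈ S, IsLine L) {g : MvPolynomial (Fin 2) ℝ} (hg : g ≠ 0)
    (hvan : ∀ L ∈ S, ∀ q ∈ L, pev g q = 0) : #S ≤ g.totalDegree := by
  classical
  induction S using Finset.induction_on generalizing g with
  | empty => simp
  | insert L S hLS ih =>
    obtain ⟨a, b, c, hab, rfl⟩ := hS _ (mem_insert_self _ _)
    obtain ⟨k, rfl⟩ := (affineForm_dvd_iff hab).2 (hvan _ (mem_insert_self _ _))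
    have hk : k ≠ 0 := right_ne_zero_of_mul hg
    have hvan' : ∀ L' ∈ S, ∀ q ∈ L', pev k q = 0 := by
      intro L' hL'
      obtain ⟨a', b', c', hab', rfl⟩ := hS _ (mem_insert_of_mem hL')
      rw [← affineForm_dvd_iff hab']
      refine ((prime_of_totalDegree_eq_one (totalDegree_affineForm hab')).dvd_or_dvd
        ((affineForm_dvd_iff hab').2 (hvan _ (mem_insert_of_mem hL')))).resolve_left
        fun h => hLS ?_
      rwa [lineSet_eq_of_affineForm_dvd hab' hab h] at hL'
    have := ih (fun L hL => hS L (mem_insert_of_mem hL)) hk hvan'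
    rw [card_insert_of_notMem hLS, totalDegree_mul_of_isDomain (affineForm_ne_zero hab) hk,
      totalDegree_affineForm hab]
    omega

lemma exists_totalDegree_eq_card_forall_pev_eq_zero {S : Finset (Set (ℝ × ℝ))}
    (hS : ∀ L ∈ S, IsLine L) :
    ∃ g : MvPolynomial (Fin 2) ℝ, g ≠ 0 ∧ g.totalDegree = #S ∧ ∀ L ∈ S, ∀ q ∈ L, pev g q = 0 := by
  classical
  induction S using Finset.induction_on with
  | empty => exact ⟨1, one_ne_zero, by simp, by simp⟩
  | insert L S hLS ih =>
    obtain ⟨a, b, c, hab, rfl⟩ := hS _ (mem_insert_self _ _)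
    obtain ⟨g, hg, hdeg, hvan⟩ := ih fun L hL => hS L (mem_insert_of_mem hL)
    refine ⟨affineForm a b c * g, mul_ne_zero (affineForm_ne_zero hab) hg, ?_, ?_⟩
    · rw [totalDegree_mul_of_isDomain (affineForm_ne_zero hab) hg, totalDegree_affineForm hab,
        hdeg, card_insert_of_notMem hLS, add_comm]
    · simp only [mem_insert, forall_eq_or_imp]
      refine ⟨fun q hq => by rw [pev_mul, mem_lineSet_iff.1 hq, zero_mul], fun L hL q hq => ?_⟩
      rw [pev_mul, hvan L hL q hq, mul_zero]

lemma IsCentral.exists_eq_mul {P Q : MvPolynomial (Fin 2) ℝ} (h : IsCentral P Q) :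
    ∃ c : ℝ × ℝ, ∃ g ≠ 0, P = (X 0 - C c.1) * g ∧ Q = (X 1 - C c.2) * g := by
  obtain ⟨hPQ, c, hc⟩ := h
  have hprime : Prime (X 0 - C c.1 : MvPolynomial (Fin 2) ℝ) :=
    prime_of_totalDegree_eq_one (totalDegree_X_sub_C 0 c.1)
  have hndvd : ¬ (X 0 - C c.1) ∣ (X 1 - C c.2 : MvPolynomial (Fin 2) ℝ) := by
    rintro ⟨k, hk⟩
    simpa [pev] using congrArg (pev · (c.1, c.2 + 1)) hk
  obtain ⟨g, rfl⟩ := (hprime.dvd_or_dvd ⟨Q, hc.symm⟩).resolve_left hndvd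
  have hQ : Q = (X 1 - C c.2) * g := mul_left_cancel₀ hprime.ne_zero (by rw [hc]; ring)
  refine ⟨c, g, ?_, rfl, hQ⟩
  rintro rfl
  simp_all

lemma radial_combination_eq {a b d : ℝ} (c : ℝ × ℝ) (g : MvPolynomial (Fin 2) ℝ) {q : ℝ × ℝ}
    (hq : q ∈ lineSet a b d) :
    a * pev ((X 0 - C c.1) * g) q + b * pev ((X 1 - C c.2) * g) q =
      -(a * c.1 + b * c.2 + d) * pev g q := by
  have hq : a * q.1 + b * q.2 + d = 0 := hq
  simp [pev]
  linear_combination (eval ![q.1, q.2] g) * hq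

lemma invLine_radial_iff {c : ℝ × ℝ} {g : MvPolynomial (Fin 2) ℝ} {L : Set (ℝ × ℝ)}
    (hL : IsLine L) :
    InvLine ((X 0 - C c.1) * g) ((X 1 - C c.2) * g) L ↔ (c ∉ L → ∀ q ∈ L, pev g q = 0) := by
  constructor
  · rintro ⟨a, b, d, -, rfl, h⟩ hc q hq
    have := h q hq
    rw [radial_combination_eq c g hq] at this
    exact (mul_eq_zero.1 this).resolve_left (neg_ne_zero.2 hc)
  · obtain ⟨a, b, d, hab, rfl⟩ := hL
    refine fun h => ⟨a, b, d, hab, rfl, fun q hq => ?_⟩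
    rw [radial_combination_eq c g hq]
    by_cases hc : c ∈ lineSet a b d
    · rw [show a * c.1 + b * c.2 + d = 0 from hc, neg_zero, zero_mul]
    · rw [h hc q hq, mul_zero]

lemma bddAbove_range_numThrough (A : Finset (Set (ℝ × ℝ))) :
    BddAbove (Set.range (numThrough A)) := by
  classical
  exact ⟨#A, by rintro _ ⟨q, rfl⟩; exact card_filter_le _ _⟩

lemma numThrough_le_mArr (A : Finset (Set (ℝ × ℝ))) (q : ℝ × ℝ) : numThrough A q ≤ mArr A :=
  le_csSup (bddAbove_range_numThrough A) ⟨q, rfl⟩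

lemma exists_numThrough_eq_mArr (A : Finset (Set (ℝ × ℝ))) : ∃ q, numThrough A q = mArr A :=
  Nat.sSup_mem (Set.range_nonempty _) (bddAbove_range_numThrough A)

open scoped Classical in
lemma card_filter_notMem_eq (A : Finset (Set (ℝ × ℝ))) (q : ℝ × ℝ) :
    #(A.filter (q ∉ ·)) = #A - numThrough A q := by
  rw [numThrough, ← card_filter_add_card_filter_not (fun L => q ∈ L) (s := A)]
  omega

theorem central_minimal_degree_general
    (A : Finset (Set (ℝ × ℝ))) (hA : ∀ L ∈ A, IsLine L) :
    (∃ P Q : MvPolynomial (Fin 2) ℝ, IsCentral P Q ∧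
        max P.totalDegree Q.totalDegree = A.card - mArr A + 1 ∧
        ∀ L ∈ A, InvLine P Q L) ∧
    (∀ P Q : MvPolynomial (Fin 2) ℝ, IsCentral P Q → (∀ L ∈ A, InvLine P Q L) →
        A.card - mArr A + 1 ≤ max P.totalDegree Q.totalDegree) := by
  classical
  have hS (c : ℝ × ℝ) : ∀ L ∈ A.filter (c ∉ ·), IsLine L := fun L hL => hA L (mem_filter.1 hL).1
  refine ⟨?_, fun P Q hPQ hinv => ?_⟩
  · obtain ⟨c, hc⟩ := exists_numThrough_eq_mArr A
    obtain ⟨g, hg, hdeg, hvan⟩ := exists_totalDegree_eq_card_forall_pev_eq_zero (hS c)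
    refine ⟨(X 0 - C c.1) * g, (X 1 - C c.2) * g,
      ⟨Or.inl (mul_ne_zero (X_sub_C_ne_zero 0 c.1) hg), c, by ring⟩, ?_,
      fun L hL => (invLine_radial_iff (hA L hL)).2 fun hcL => hvan L (mem_filter.2 ⟨hL, hcL⟩)⟩
    rw [totalDegree_X_sub_C_mul _ _ hg, totalDegree_X_sub_C_mul _ _ hg, max_self, hdeg,
      card_filter_notMem_eq, hc]
  · obtain ⟨c, g, hg, rfl, rfl⟩ := hPQ.exists_eq_mul
    have hcard := card_le_totalDegree_of_forall_pev_eq_zero (hS c) hg fun L hL =>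
      (invLine_radial_iff (hA L (mem_filter.1 hL).1)).1 (hinv L (mem_filter.1 hL).1)
        (mem_filter.1 hL).2
    rw [card_filter_notMem_eq] at hcard
    have := numThrough_le_mArr A c
    rw [totalDegree_X_sub_C_mul _ _ hg]
    omega

/-- **Proposition.** The minimal degree of a nonzero central vector field fixing a
nonempty line arrangement `A` with `n` lines is exactly `n - m(A) + 1`: such a
central vector field of degree `n - m(A) + 1` exists, and every nonzero central
vector field fixing `A` has degree at least `n - m(A) + 1`. -/
theorem central_minimal_degree
    (A : Finset (Set (ℝ × ℝ))) (hA : ∀ L ∈ A, IsLine L) (hne : A.Nonempty) :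
    (∃ P Q : MvPolynomial (Fin 2) ℝ, IsCentral P Q ∧
        max P.totalDegree Q.totalDegree = A.card - mArr A + 1 ∧
        ∀ L ∈ A, InvLine P Q L) ∧
    (∀ P Q : MvPolynomial (Fin 2) ℝ, IsCentral P Q → (∀ L ∈ A, InvLine P Q L) →
        A.card - mArr A + 1 ≤ max P.totalDegree Q.totalDegree) :=
  central_minimal_degree_general A hA
end
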